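/- Let f : ℝⁿ → ℝ ∪ {±∞} be lower semi-continuous with {x : f(x) < +∞} unbounded. Suppose the set of subgradients at infinity ∂f(∞) is nonempty and contains no entire line (i.e., there is no ξ ∈ ∂f(∞) and nonzero u ∈ ℝⁿ with ξ + t u ∈ ∂f(∞) for all t ∈ ℝ). Then the Clarke subgradient multifunction is closed at infinity: whenever ‖x_k‖ → ∞, ξ_k ∈ ∂f(x_k), and ξ_k → ξ, one has ξ ∈ ∂f(∞). -/

import Mathlib

open Filter Topology Metric Set Bornology
open scoped InnerProductSpace Pointwise

noncomputable section

/-- Euclidean `n`-space. -/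
abbrev En (n : ℕ) : Type := EuclideanSpace ℝ (Fin n)

/-- The Clarke tangent cone at infinity of `C ⊆ E`, where "going to infinity" is
measured by `‖p x‖ → ∞` for a projection map `p`:  `v` belongs to the cone iff for all
sequences `x k ∈ C` with `‖p (x k)‖ → ∞` and all positive sequences `t k → 0` there is a
sequence `w k → v` with `x k + t k • w k ∈ C` for all `k`. -/
def tangentConeAtInfty {E F : Type*} [NormedAddCommGroup E] [NormedSpace ℝ E] [Norm F]
    (p : E → F) (C : Set E) : Set E :=
  {v | ∀ (x : ℕ → E) (t : ℕ → ℝ), (∀ k, x k ∈ C) →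
      Tendsto (fun k => ‖p (x k)‖) atTop atTop →
      (∀ k, 0 < t k) → Tendsto t atTop (𝓝 0) →
      ∃ w : ℕ → E, Tendsto w atTop (𝓝 v) ∧ ∀ k, x k + t k • w k ∈ C}

/-- The epigraph of an extended-real-valued function. -/
def epig {n : ℕ} (f : En n → EReal) : Set (En n × ℝ) := {p | f p.1 ≤ (p.2 : EReal)}

/-- Clarke tangent cone at infinity of the epigraph of `f`, with respect to the index set
`I = {1,…,n} ⊆ {1,…,n+1}`, i.e. the projection `(x, y) ↦ x`. -/
def Tepi {n : ℕ} (f : En n → EReal) : Set (En n × ℝ) :=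
  tangentConeAtInfty Prod.fst (epig f)

/-- Normal cone at infinity of the epigraph of `f` (polar cone of `Tepi f`, using the
inner product `⟪(v,r), (w,s)⟫ = ⟪v,w⟫ + r*s` of `ℝⁿ × ℝ = ℝ^{n+1}`). -/
def Nepi {n : ℕ} (f : En n → EReal) : Set (En n × ℝ) :=
  {w | ∀ q ∈ Tepi f, ⟪q.1, w.1⟫_ℝ + q.2 * w.2 ≤ 0}

/-- The set `∂f(∞)` of subgradients of `f` at infinity. -/
def subgradInfty {n : ℕ} (f : En n → EReal) : Set (En n) :=
  {ξ | (ξ, (-1:ℝ)) ∈ Nepi f}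

/-- The Clarke tangent cone to `C` at a point `x`. -/
def clarkeTangentCone {E : Type*} [NormedAddCommGroup E] [NormedSpace ℝ E]
    (C : Set E) (x : E) : Set E :=
  {v | ∀ (xk : ℕ → E) (t : ℕ → ℝ), (∀ k, xk k ∈ C) →
      Tendsto xk atTop (𝓝 x) →
      (∀ k, 0 < t k) → Tendsto t atTop (𝓝 0) →
      ∃ w : ℕ → E, Tendsto w atTop (𝓝 v) ∧ ∀ k, xk k + t k • w k ∈ C}

/-- The Clarke generalized gradient of `f` at a point `x` (empty unless `f x` is finite):
`ξ ∈ ∂f(x)` iff `(ξ, -1)` lies in the Clarke normal cone of `epi f` at `(x, f x)`. -/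
def clarkeSubgrad {n : ℕ} (f : En n → EReal) (x : En n) : Set (En n) :=
  {ξ | ∃ y : ℝ, (y : EReal) = f x ∧
    ∀ q ∈ clarkeTangentCone (epig f) (x, y), ⟪q.1, ξ⟫_ℝ + q.2 * (-1 : ℝ) ≤ 0}

section Aux

set_option maxHeartbeats 1000000

lemma isClosed_epig {n : ℕ} (f : En n → EReal) (h : LowerSemicontinuous f) :
    IsClosed (epig f) := by
  rw [← isOpen_compl_iff, isOpen_iff_mem_nhds]
  intro p hp
  simp only [mem_compl_iff, epig, mem_setOf_eq, not_le] at hp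
  obtain ⟨c, hc1, hc2⟩ := EReal.exists_between_coe_real hp
  have h1 : ∀ᶠ x' in 𝓝 p.1, (c : EReal) < f x' := h p.1 _ hc2
  have hpc : p.2 < c := by exact_mod_cast hc1
  have h2 : ∀ᶠ y : ℝ in 𝓝 p.2, y < c := tendsto_id.eventually_lt_const hpc
  have : ∀ᶠ q : En n × ℝ in 𝓝 p, ((c : EReal) < f q.1 ∧ q.2 < c) := by
    have := h1.prod_nhds h2
    rwa [Prod.mk.eta] at this
  filter_upwards [this] with q hq
  simp only [mem_compl_iff, epig, mem_setOf_eq, not_le]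
  calc (q.2 : EReal) < (c : EReal) := by exact_mod_cast hq.2
    _ < f q.1 := hq.1

variable {E G : Type*} [NormedAddCommGroup E] [NormedSpace ℝ E]
  [NormedAddCommGroup G] [NormedSpace ℝ G]

lemma zero_mem_tcai (p : E × G → E) (C : Set (E × G)) :
    0 ∈ tangentConeAtInfty p C := by
  intro x t hxC _ _ _
  exact ⟨0, tendsto_const_nhds, fun k => by simpa using hxC k⟩

lemma smul_mem_tcai (p : E × G → E) (C : Set (E × G)) {v : E × G} {c : ℝ} (hc : 0 < c)
    (hv : v ∈ tangentConeAtInfty p C) : c • v ∈ tangentConeAtInfty p C := by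
  intro x t hxC hxi ht ht0
  obtain ⟨w, hw, hwC⟩ := hv x (fun k => c * t k) hxC hxi
    (fun k => mul_pos hc (ht k)) (by simpa using ht0.const_mul c)
  refine ⟨fun k => c • w k, hw.const_smul c, fun k => ?_⟩
  have := hwC k
  simp only [mul_smul] at this
  rw [smul_comm] at this
  exact this

lemma norm_tendsto_of_perturb {x : ℕ → E × G} {d : ℕ → E × G}
    (hxi : Tendsto (fun k => ‖(x k).1‖) atTop atTop) (hd : Tendsto d atTop (𝓝 0)) :
    Tendsto (fun k => ‖(x k + d k).1‖) atTop atTop := by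
  have hb : ∀ᶠ k in atTop, ‖(x k).1‖ - 1 ≤ ‖(x k + d k).1‖ := by
    have : ∀ᶠ k in atTop, ‖d k‖ ≤ 1 := by
      have h0 := hd.norm
      rw [norm_zero] at h0
      exact (h0.eventually_lt_const (by norm_num : (0:ℝ) < 1)).mono (fun k h => le_of_lt h)
    filter_upwards [this] with k hk
    have h1 : ‖(x k).1‖ ≤ ‖(x k + d k).1‖ + ‖(d k).1‖ := by
      calc ‖(x k).1‖ = ‖(x k + d k).1 - (d k).1‖ := by simp
        _ ≤ ‖(x k + d k).1‖ + ‖(d k).1‖ := norm_sub_le _ _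
    have h2 : ‖(d k).1‖ ≤ 1 := le_trans (norm_fst_le _) hk
    linarith
  exact tendsto_atTop_mono' _ hb (tendsto_atTop_add_const_right _ _ hxi)

lemma add_mem_tcai (p : E × G → E) (hp : p = Prod.fst) (C : Set (E × G)) {v v' : E × G}
    (hv : v ∈ tangentConeAtInfty p C) (hv' : v' ∈ tangentConeAtInfty p C) :
    v + v' ∈ tangentConeAtInfty p C := by
  subst hp
  intro x t hxC hxi ht ht0
  obtain ⟨w, hw, hwC⟩ := hv x t hxC hxi ht ht0
  have hd : Tendsto (fun k => t k • w k) atTop (𝓝 0) := by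
    have := ht0.smul hw
    simpa using this
  obtain ⟨w', hw', hwC'⟩ := hv' (fun k => x k + t k • w k) t hwC
    (norm_tendsto_of_perturb hxi hd) ht ht0
  refine ⟨fun k => w k + w' k, hw.add hw', fun k => ?_⟩
  have := hwC' k
  simpa [smul_add, add_assoc] using this

lemma convex_tcai (p : E × G → E) (hp : p = Prod.fst) (C : Set (E × G)) :
    Convex ℝ (tangentConeAtInfty p C) := by
  intro v hv v' hv' a b ha hb hab
  rcases eq_or_lt_of_le ha with ha' | ha'
  · rcases eq_or_lt_of_le hb with hb' | hb'
    · exfalso; rw [← ha', ← hb'] at hab; norm_num at hab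
    · rw [← ha']
      simpa [← ha'] using smul_mem_tcai p C hb' hv'
  · rcases eq_or_lt_of_le hb with hb' | hb'
    · rw [← hb']
      simpa using smul_mem_tcai p C ha' hv
    · exact add_mem_tcai p hp C (smul_mem_tcai p C ha' hv) (smul_mem_tcai p C hb' hv')

variable {E G : Type*} [NormedAddCommGroup E] [NormedSpace ℝ E]
  [NormedAddCommGroup G] [NormedSpace ℝ G] [ProperSpace (E × G)]

lemma halving (S : Set (E × G)) (hS : IsClosed S) (hSne : S.Nonempty)
    (q : E × G) (ρ : ℝ) (hρ : 0 < ρ)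
    (hball : ball q ρ ⊆ tangentConeAtInfty Prod.fst S) :
    ∃ R σ : ℝ, 0 < σ ∧ ∀ b : E × G, R ≤ ‖b.1‖ → 0 < infDist b S → infDist b S ≤ σ →
      infDist (b + (3 * infDist b S / ρ) • q) S ≤ infDist b S / 2 := by
  by_contra hcon
  push_neg at hcon
  have hbk : ∀ k : ℕ, ∃ b : E × G, (k:ℝ) ≤ ‖b.1‖ ∧ 0 < infDist b S ∧
      infDist b S ≤ 1/(k+1) ∧ infDist b S / 2 < infDist (b + (3 * infDist b S / ρ) • q) S :=
    fun k => hcon k (1/(k+1)) (by positivity)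
  choose b hb1 hb2 hb3 hb4 using hbk
  have hc : ∀ k, ∃ c ∈ S, infDist (b k) S = dist (b k) c :=
    fun k => hS.exists_infDist_eq_dist hSne (b k)
  choose c hcS hcd using hc
  set d : ℕ → ℝ := fun k => infDist (b k) S with hd
  set u : ℕ → E × G := fun k => (d k)⁻¹ • (b k - c k) with hu
  have hbu : ∀ k, b k - c k = (d k) • u k := by
    intro k
    rw [hu]
    simp only [smul_smul]
    rw [mul_inv_cancel₀ (ne_of_gt (hb2 k)), one_smul]
  have hun : ∀ k, ‖u k‖ = 1 := by
    intro k
    rw [hu]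
    simp only [norm_smul, norm_inv, Real.norm_eq_abs, abs_of_pos (hb2 k)]
    rw [← dist_eq_norm, ← hcd k]
    rw [abs_of_pos (show 0 < d k from hb2 k)]
    exact inv_mul_cancel₀ (ne_of_gt (hb2 k))
  obtain ⟨uoo, _, φ, hφ, hφu⟩ := tendsto_subseq_of_bounded
    (isBounded_closedBall (x := (0: E×G)) (r := 1))
    (fun k => mem_closedBall_zero_iff.2 (le_of_eq (hun k)))
  have huoo : ‖uoo‖ = 1 := by
    have h1 : Tendsto (fun j => ‖(u ∘ φ) j‖) atTop (𝓝 ‖uoo‖) := hφu.norm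
    have h2 : (fun j => ‖(u ∘ φ) j‖) = fun _ => (1:ℝ) := funext fun j => hun (φ j)
    rw [h2] at h1
    exact (tendsto_nhds_unique tendsto_const_nhds h1).symm
  set v : E × G := q + (ρ/3) • uoo with hv
  have hvball : v ∈ ball q ρ := by
    rw [mem_ball, hv, dist_eq_norm]
    simp only [add_sub_cancel_left, norm_smul, Real.norm_eq_abs, huoo]
    rw [abs_of_pos (by positivity : (0:ℝ) < ρ/3)]
    linarith
  have htc := hball hvball
  set t : ℕ → ℝ := fun j => 3 * d (φ j) / ρ with ht
  have hdk1 : ∀ k, d k ≤ 1 := by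
    intro k
    refine le_trans (hb3 k) ?_
    rw [div_le_one (by positivity)]
    simp [Nat.cast_nonneg]
  have hcnorm : ∀ k : ℕ, (k:ℝ) - 1 ≤ ‖(c k).1‖ := by
    intro k
    have h1 : ‖(b k).1 - (c k).1‖ ≤ ‖b k - c k‖ := by
      have := norm_fst_le (b k - c k)
      rwa [Prod.fst_sub] at this
    have h2 : ‖b k - c k‖ = d k := by rw [← dist_eq_norm, ← hcd k]
    have h3 : ‖(b k).1‖ - ‖(c k).1‖ ≤ ‖(b k).1 - (c k).1‖ := norm_sub_norm_le _ _
    have := hb1 k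
    have := hdk1 k
    linarith
  obtain ⟨w, hw, hwS⟩ := htc (c ∘ φ) t (fun j => hcS (φ j))
    (by
      apply tendsto_atTop_mono' _ _ (tendsto_atTop_add_const_right atTop (-1)
        tendsto_natCast_atTop_atTop)
      filter_upwards [] with j
      have h1 := hcnorm (φ j)
      have h2 : (j:ℝ) ≤ (φ j : ℝ) := by exact_mod_cast hφ.le_apply
      simp only [Function.comp_apply]
      linarith)
    (fun j => by
      have := hb2 (φ j)
      positivity)
    (by
      refine squeeze_zero (g := fun j : ℕ => 3/ρ * (1/((j:ℝ)+1)))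
        (fun j => by have := hb2 (φ j); positivity) ?_ ?_
      · intro j
        have h1 : d (φ j) ≤ 1/((φ j : ℝ) + 1) := hb3 (φ j)
        have h2 : (1:ℝ)/((φ j : ℝ) + 1) ≤ 1/((j:ℝ)+1) := by
          apply one_div_le_one_div_of_le (by positivity)
          have : (j:ℝ) ≤ (φ j : ℝ) := by exact_mod_cast hφ.le_apply
          linarith
        have h3 : d (φ j) ≤ 1/((j:ℝ)+1) := le_trans h1 h2
        show 3 * d (φ j) / ρ ≤ 3/ρ * (1/((j:ℝ)+1))
        have he : 3 * d (φ j) / ρ = 3/ρ * d (φ j) := by ring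
        rw [he]
        exact mul_le_mul_of_nonneg_left h3 (by positivity)
      · have : Tendsto (fun j : ℕ => 1/((j:ℝ)+1)) atTop (𝓝 0) :=
          tendsto_one_div_add_atTop_nhds_zero_nat
        have := this.const_mul (3/ρ)
        simpa using this)
  -- now derive contradiction
  have hA : Tendsto (fun j => ‖(ρ/3) • u (φ j) + q - w j‖) atTop (𝓝 0) := by
    have h1 : Tendsto (fun j => (ρ/3) • (u ∘ φ) j + q - w j) atTop
        (𝓝 ((ρ/3) • uoo + q - v)) := ((hφu.const_smul (ρ/3)).add_const q).sub hw
    rw [hv] at h1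
    have h2 : (ρ/3) • uoo + q - (q + (ρ/3) • uoo) = 0 := by abel
    rw [h2] at h1
    simpa using h1.norm
  obtain ⟨j, hj⟩ := (hA.eventually_lt_const (by positivity : (0:ℝ) < ρ/6)).exists
  have hkey : infDist (b (φ j) + t j • q) S ≤ t j * ‖(ρ/3) • u (φ j) + q - w j‖ := by
    have h1 : infDist (b (φ j) + t j • q) S ≤ dist (b (φ j) + t j • q) (c (φ j) + t j • w j) :=
      infDist_le_dist_of_mem (hwS j)
    rw [dist_eq_norm] at h1
    have h2 : b (φ j) + t j • q - (c (φ j) + t j • w j)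
        = t j • ((ρ/3) • u (φ j) + q - w j) := by
      have h3 : b (φ j) - c (φ j) = (d (φ j)) • u (φ j) := hbu (φ j)
      have h4 : d (φ j) = t j * (ρ/3) := by
        rw [ht]
        field_simp
      rw [smul_sub, smul_add, smul_smul, ← h4, ← h3]
      abel
    rw [h2, norm_smul, Real.norm_eq_abs,
      abs_of_pos (by have := hb2 (φ j); rw [ht]; positivity)] at h1
    exact h1
  have hfin : infDist (b (φ j) + t j • q) S ≤ d (φ j) / 2 := by
    have h5 : t j * ‖(ρ/3) • u (φ j) + q - w j‖ ≤ t j * (ρ/6) := by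
      apply mul_le_mul_of_nonneg_left (le_of_lt hj)
      rw [ht]; have := hb2 (φ j); positivity
    have h6 : t j * (ρ/6) = d (φ j) / 2 := by
      rw [ht]; field_simp; ring
    linarith
  have := hb4 (φ j)
  rw [ht] at hfin
  simp only [hd] at hfin this
  linarith

lemma landing (S : Set (E × G)) (hS : IsClosed S) (hSne : S.Nonempty)
    (q : E × G) (ρ : ℝ) (hρ : 0 < ρ)
    (hball : ball q ρ ⊆ tangentConeAtInfty Prod.fst S) :
    ∃ R σ : ℝ, 0 < σ ∧ ∀ b : E × G, R ≤ ‖b.1‖ → infDist b S ≤ σ →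
      ∃ τ : ℝ, 0 ≤ τ ∧ τ ≤ 6/ρ * infDist b S ∧ b + τ • q ∈ S := by
  obtain ⟨R, σ, hσ, H⟩ := halving S hS hSne q ρ hρ hball
  refine ⟨R + 1, min σ (ρ/(6 * (‖q‖+1))), by positivity, fun b hb hbd => ?_⟩
  set d0 : ℝ := infDist b S with hd0
  have hd0nn : 0 ≤ d0 := infDist_nonneg
  have hd0σ : d0 ≤ σ := le_trans hbd (min_le_left _ _)
  have hd0ρ : d0 ≤ ρ/(6 * (‖q‖+1)) := le_trans hbd (min_le_right _ _)
  -- iteration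
  set T : ℕ → ℝ := fun j => Nat.rec 0 (fun _ Tj => Tj + 3 * infDist (b + Tj • q) S / ρ) j
    with hT
  have hTsucc : ∀ j, T (j+1) = T j + 3 * infDist (b + T j • q) S / ρ := fun j => rfl
  have hT0 : T 0 = 0 := rfl
  have key : ∀ j : ℕ, infDist (b + T j • q) S ≤ (1/2)^j * d0 ∧ 0 ≤ T j ∧
      T j ≤ 6/ρ * d0 * (1 - (1/2)^j) := by
    intro j
    induction j with
    | zero =>
      refine ⟨?_, le_refl _, ?_⟩
      · rw [hT0]; simp [hd0]
      · simp [hT0]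
    | succ j ih =>
      obtain ⟨ihD, ihT0, ihT⟩ := ih
      have hDnn : 0 ≤ infDist (b + T j • q) S := infDist_nonneg
      have h2j : (0:ℝ) < (1/2)^j := by positivity
      have hTj1 : T j * ‖q‖ ≤ 1 := by
        have h1 : T j ≤ 6/ρ * d0 := by
          have h2j' : (0:ℝ) ≤ (1/2)^j := by positivity
          have h3 : (0:ℝ) ≤ 6/ρ*d0 := mul_nonneg (by positivity) hd0nn
          nlinarith [ihT]
        have h2 : 6/ρ * d0 ≤ 1/(‖q‖+1) := by
          have hc : (0:ℝ) < 6*(‖q‖+1) := by positivity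
          have hdc : d0 * (6*(‖q‖+1)) ≤ ρ := (le_div_iff₀ hc).1 hd0ρ
          rw [div_mul_eq_mul_div, div_le_div_iff₀ hρ (by positivity : (0:ℝ) < ‖q‖+1)]
          nlinarith [hdc]
        have h3 : T j ≤ 1/(‖q‖+1) := le_trans h1 h2
        calc T j * ‖q‖ ≤ (1/(‖q‖+1)) * ‖q‖ := by
              apply mul_le_mul_of_nonneg_right h3 (norm_nonneg q)
          _ ≤ 1 := by
              rw [div_mul_eq_mul_div, div_le_one (by positivity)]
              linarith
      have hbTj : R ≤ ‖(b + T j • q).1‖ := by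
        have h1 : ‖(b + T j • q).1 - b.1‖ ≤ ‖T j • q‖ := by
          have : (b + T j • q).1 - b.1 = (T j • q).1 := by simp
          rw [this]
          exact norm_fst_le _
        have h2 : ‖T j • q‖ = T j * ‖q‖ := by
          rw [norm_smul, Real.norm_eq_abs, abs_of_nonneg ihT0]
        have h3 : ‖b.1‖ - ‖(b + T j • q).1‖ ≤ ‖(b + T j • q).1 - b.1‖ := by
          rw [norm_sub_rev]
          exact norm_sub_norm_le _ _
        linarith
      rcases eq_or_lt_of_le hDnn with hDz | hDpos
      · -- infDist = 0 : step is trivial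
        have hstep : T (j+1) = T j := by
          rw [hTsucc, ← hDz]
          simp
        refine ⟨?_, ?_, ?_⟩
        · rw [hstep, ← hDz]
          exact mul_nonneg (by positivity) hd0nn
        · rw [hstep]; exact ihT0
        · rw [hstep]
          refine le_trans ihT ?_
          apply mul_le_mul_of_nonneg_left _ (mul_nonneg (by positivity) hd0nn)
          have : (1/2:ℝ)^(j+1) ≤ (1/2)^j := by
            apply pow_le_pow_of_le_one (by norm_num) (by norm_num)
            omega
          linarith
      · have hDσ : infDist (b + T j • q) S ≤ σ := by
          refine le_trans ihD ?_
          calc (1/2:ℝ)^j * d0 ≤ 1 * d0 := by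
                apply mul_le_mul_of_nonneg_right _ hd0nn
                exact pow_le_one₀ (by norm_num) (by norm_num)
            _ = d0 := one_mul d0
            _ ≤ σ := hd0σ
        have hhalf := H (b + T j • q) hbTj hDpos hDσ
        have hre : b + T j • q + (3 * infDist (b + T j • q) S / ρ) • q = b + T (j+1) • q := by
          rw [hTsucc, add_smul]
          abel
        have hpow : (1/2:ℝ)^(j+1) = (1/2)^j / 2 := by rw [pow_succ]; ring
        have hstep : infDist (b + T (j+1) • q) S ≤ infDist (b + T j • q) S / 2 := by
          rw [← hre]
          exact hhalf
        refine ⟨?_, ?_, ?_⟩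
        · rw [hpow]
          linarith
        · rw [hTsucc]
          have : 0 ≤ 3 * infDist (b + T j • q) S / ρ :=
            div_nonneg (mul_nonneg (by norm_num) infDist_nonneg) hρ.le
          linarith
        · rw [hTsucc]
          have h5 : 3 * infDist (b + T j • q) S / ρ ≤ 3 * ((1/2)^j * d0) / ρ := by
            gcongr
          have h6 : 6/ρ * d0 * (1 - (1/2)^(j+1))
              = 6/ρ * d0 * (1 - (1/2)^j) + 3 * ((1/2)^j * d0) / ρ := by
            rw [hpow]; ring
          linarith
  -- pass to the limit
  have hmono : Monotone T := by
    apply monotone_nat_of_le_succ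
    intro j
    rw [hTsucc]
    have : 0 ≤ 3 * infDist (b + T j • q) S / ρ :=
      div_nonneg (mul_nonneg (by norm_num) infDist_nonneg) hρ.le
    linarith
  have hbdd : BddAbove (Set.range T) := by
    refine ⟨6/ρ * d0, ?_⟩
    rintro _ ⟨j, rfl⟩
    have h1 := (key j).2.2
    have h2 : (0:ℝ) ≤ (1/2)^j := by positivity
    have h3 : (0:ℝ) ≤ 6/ρ*d0*(1/2)^j :=
      mul_nonneg (mul_nonneg (div_nonneg (by norm_num) hρ.le) hd0nn) h2
    nlinarith [h1, h3]
  set τ : ℝ := ⨆ j, T j with hτ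
  have htends : Tendsto T atTop (𝓝 τ) := tendsto_atTop_ciSup hmono hbdd
  have hτ0 : 0 ≤ τ := by
    rw [hτ, ← hT0]
    exact le_ciSup hbdd 0
  have hτle : τ ≤ 6/ρ * d0 := by
    apply ciSup_le
    intro j
    have h1 := (key j).2.2
    have h2 : (0:ℝ) ≤ (1/2)^j := by positivity
    have h3 : (0:ℝ) ≤ 6/ρ*d0*(1/2)^j :=
      mul_nonneg (mul_nonneg (div_nonneg (by norm_num) hρ.le) hd0nn) h2
    nlinarith [h1, h3]
  refine ⟨τ, hτ0, hτle, ?_⟩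
  have hDlim : Tendsto (fun j => infDist (b + T j • q) S) atTop (𝓝 0) := by
    refine squeeze_zero (g := fun j : ℕ => (1/2:ℝ)^j * d0) (fun j => infDist_nonneg)
      (fun j => (key j).1) ?_
    have h1 : Tendsto (fun j : ℕ => (1/2:ℝ)^j) atTop (𝓝 0) :=
      tendsto_pow_atTop_nhds_zero_of_lt_one (by norm_num) (by norm_num)
    simpa using h1.mul_const d0
  have hDlim2 : Tendsto (fun j => infDist (b + T j • q) S) atTop
      (𝓝 (infDist (b + τ • q) S)) := by
    have h1 : Tendsto (fun j => b + T j • q) atTop (𝓝 (b + τ • q)) :=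
      tendsto_const_nhds.add (htends.smul_const q)
    exact ((continuous_infDist_pt S).tendsto _).comp h1
  have hzero : infDist (b + τ • q) S = 0 := tendsto_nhds_unique hDlim2 hDlim
  exact (hS.mem_iff_infDist_zero hSne).2 hzero

lemma dirhyper (S : Set (E × G)) (hS : IsClosed S) (hSne : S.Nonempty)
    (q : E × G) (ρ : ℝ) (hρ : 0 < ρ)
    (hball : ball q ρ ⊆ tangentConeAtInfty Prod.fst S) :
    ∃ R σ : ℝ, 0 < σ ∧ ∀ z ∈ S, R ≤ ‖z.1‖ → ∀ t : ℝ, 0 ≤ t → t ≤ σ → z + t • q ∈ S := by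
  obtain ⟨R, σ, hσ, HI⟩ := landing S hS hSne q ρ hρ hball
  refine ⟨R + 1, min (σ/(‖q‖+1)) (1/(‖q‖+1)), by positivity, ?_⟩
  intro z hzS hzR t ht0 htσ
  set A : Set ℝ := {s | s ∈ Icc 0 t ∧ z + s • q ∈ S} with hA
  have hAne : (0:ℝ) ∈ A := by
    constructor
    · exact ⟨le_refl 0, ht0⟩
    · simpa using hzS
  have hAbdd : BddAbove A := ⟨t, fun s hs => hs.1.2⟩
  have hAclosed : IsClosed A := by
    apply IsClosed.inter isClosed_Icc
    exact IsClosed.preimage (by continuity) hS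
  have haA : sSup A ∈ A := hAclosed.csSup_mem ⟨0, hAne⟩ hAbdd
  set a : ℝ := sSup A with ha
  have ha0 : 0 ≤ a := le_csSup hAbdd hAne
  have hat : a ≤ t := haA.1.2
  have haS : z + a • q ∈ S := haA.2
  -- suppose a < t and derive a contradiction
  rcases eq_or_lt_of_le hat with heq | hlt
  · rw [heq] at haS; exact haS
  exfalso
  set κ : ℝ := 1 + 6*‖q‖/ρ with hκ
  have hκ1 : (1:ℝ) ≤ κ := by
    rw [hκ]
    have : 0 ≤ 6*‖q‖/ρ := by positivity
    linarith
  set ε : ℝ := (t - a)/(2*κ) with hε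
  have hε0 : 0 < ε := by
    rw [hε]
    apply div_pos (by linarith) (by linarith)
  set s : ℝ := a + ε with hs
  have hst : s ≤ t := by
    rw [hs, hε]
    have h1 : (t-a)/(2*κ) ≤ (t-a)/2 :=
      div_le_div_of_nonneg_left (by linarith) (by norm_num) (by linarith)
    linarith
  have hs0 : 0 ≤ s := by rw [hs]; linarith
  set b : E × G := z + s • q with hb
  have hq1 : (0:ℝ) < ‖q‖ + 1 := by positivity
  have hsσ' : s ≤ σ/(‖q‖+1) := le_trans hst (le_trans htσ (min_le_left _ _))
  have hs1' : s ≤ 1/(‖q‖+1) := le_trans hst (le_trans htσ (min_le_right _ _))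
  have hsq1 : s * ‖q‖ ≤ 1 := by
    calc s * ‖q‖ ≤ (1/(‖q‖+1)) * ‖q‖ := mul_le_mul_of_nonneg_right hs1' (norm_nonneg q)
      _ ≤ 1 := by rw [div_mul_eq_mul_div, div_le_one hq1]; linarith
  have hsqσ : s * ‖q‖ ≤ σ := by
    calc s * ‖q‖ ≤ (σ/(‖q‖+1)) * ‖q‖ := mul_le_mul_of_nonneg_right hsσ' (norm_nonneg q)
      _ ≤ σ := by
          rw [div_mul_eq_mul_div, div_le_iff₀ hq1]
          nlinarith [hσ.le, norm_nonneg q]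
  have hbd : infDist b S ≤ ε * ‖q‖ := by
    have h1 : infDist b S ≤ dist b (z + a • q) := infDist_le_dist_of_mem haS
    have h2 : dist b (z + a • q) = ε * ‖q‖ := by
      rw [hb, dist_eq_norm]
      have h3 : z + s • q - (z + a • q) = (s - a) • q := by
        rw [sub_smul]
        abel
      rw [h3, norm_smul, Real.norm_eq_abs, hs]
      rw [abs_of_nonneg (by linarith : (0:ℝ) ≤ a + ε - a)]
      ring_nf
    linarith [h1, h2.le, h2.ge]
  have hεs : ε ≤ s := by rw [hs]; linarith
  have hbR : R ≤ ‖b.1‖ := by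
    have h1 : ‖b.1 - z.1‖ ≤ ‖b - z‖ := by
      have := norm_fst_le (b - z)
      rwa [Prod.fst_sub] at this
    have h2 : ‖b - z‖ = s * ‖q‖ := by
      rw [hb]
      simp only [add_sub_cancel_left]
      rw [norm_smul, Real.norm_eq_abs, abs_of_nonneg hs0]
    have h3 : ‖z.1‖ - ‖b.1‖ ≤ ‖b.1 - z.1‖ := by
      rw [norm_sub_rev]; exact norm_sub_norm_le _ _
    linarith
  have hbσ : infDist b S ≤ σ := by
    have : ε * ‖q‖ ≤ s * ‖q‖ := mul_le_mul_of_nonneg_right hεs (norm_nonneg q)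
    linarith
  obtain ⟨τ, hτ0, hτle, hτS⟩ := HI b hbR hbσ
  have hτε : τ ≤ 6*‖q‖/ρ * ε := by
    have h1 : 6/ρ * infDist b S ≤ 6/ρ * (ε * ‖q‖) :=
      mul_le_mul_of_nonneg_left hbd (by positivity)
    have h2 : 6/ρ * (ε * ‖q‖) = 6*‖q‖/ρ * ε := by ring
    linarith
  have hmemS : z + (s + τ) • q ∈ S := by
    have : z + (s + τ) • q = b + τ • q := by
      rw [hb, add_smul]
      abel
    rw [this]
    exact hτS
  have hκε : κ * ε = (t - a)/2 := by
    have hκ0 : κ ≠ 0 := by rw [hκ]; positivity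
    rw [hε]
    field_simp
  have hsum : s + τ ≤ t := by
    have h1 : s + τ ≤ a + ε + 6*‖q‖/ρ * ε := by rw [hs]; linarith
    have h2 : a + ε + 6*‖q‖/ρ * ε = a + κ * ε := by rw [hκ]; ring
    have h3 : a + κ * ε = a + (t-a)/2 := by rw [hκε]
    linarith
  have hin : s + τ ∈ A := ⟨⟨by linarith, hsum⟩, hmemS⟩
  have : s + τ ≤ a := le_csSup hAbdd hin
  have : a + ε ≤ a := by rw [hs] at this; linarith
  linarith

lemma interior_to_clarke (S : Set (E × G)) (hS : IsClosed S) (hSne : S.Nonempty)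
    (q : E × G) (hq : q ∈ interior (tangentConeAtInfty Prod.fst S)) :
    ∃ R : ℝ, ∀ z ∈ S, R ≤ ‖z.1‖ → q ∈ clarkeTangentCone S z := by
  obtain ⟨ρ, hρ, hball⟩ := Metric.isOpen_iff.1 isOpen_interior q hq
  have hball' : ball q ρ ⊆ tangentConeAtInfty Prod.fst S :=
    le_trans hball interior_subset
  obtain ⟨R, σ, hσ, HJ⟩ := dirhyper S hS hSne q ρ hρ hball'
  refine ⟨R + 1, fun z hzS hzR => ?_⟩
  intro xk t hxkS hxkz ht ht0
  have h1 : ∀ᶠ k in atTop, dist (xk k) z ≤ 1 := by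
    have := hxkz
    rw [Metric.tendsto_nhds] at this
    exact (this 1 (by norm_num)).mono (fun k h => le_of_lt h)
  have h2 : ∀ᶠ k in atTop, t k ≤ σ := by
    have := ht0
    rw [Metric.tendsto_nhds] at this
    refine (this σ hσ).mono (fun k h => ?_)
    rw [Real.dist_eq, sub_zero, abs_of_pos (ht k)] at h
    exact h.le
  obtain ⟨N, hN⟩ := (h1.and h2).exists_forall_of_atTop
  refine ⟨fun k => if N ≤ k then q else 0, ?_, ?_⟩
  · apply Tendsto.congr' (f₁ := fun _ => q)
    · filter_upwards [eventually_ge_atTop N] with k hk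
      simp [hk]
    · exact tendsto_const_nhds
  · intro k
    by_cases hk : N ≤ k
    · simp only [hk, if_pos]
      obtain ⟨hd, htk⟩ := hN k hk
      apply HJ (xk k) (hxkS k) _ (t k) (ht k).le htk
      have ha : ‖(xk k).1 - z.1‖ ≤ ‖xk k - z‖ := by
        have := norm_fst_le (xk k - z)
        rwa [Prod.fst_sub] at this
      have hb : ‖xk k - z‖ = dist (xk k) z := (dist_eq_norm _ _).symm
      have hc : ‖z.1‖ - ‖(xk k).1‖ ≤ ‖(xk k).1 - z.1‖ := by
        rw [norm_sub_rev]; exact norm_sub_norm_le _ _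
      linarith
    · simp only [hk, if_neg, if_false]
      simpa using hxkS k

end Aux

section Main

set_option maxHeartbeats 1000000

variable {n : ℕ}

lemma up_mem_Tepi (f : En n → EReal) : ((0 : En n), (1:ℝ)) ∈ Tepi f := by
  intro x t hxC _ ht _
  refine ⟨fun _ => ((0 : En n), (1:ℝ)), tendsto_const_nhds, fun k => ?_⟩
  have hk := hxC k
  simp only [epig, mem_setOf_eq] at hk ⊢
  have h1 : (x k + t k • ((0 : En n), (1:ℝ))).1 = (x k).1 := by simp
  have h2 : (x k + t k • ((0 : En n), (1:ℝ))).2 = (x k).2 + t k := by simp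
  rw [h1, h2]
  refine le_trans hk ?_
  exact_mod_cast EReal.coe_le_coe_iff.2 (by linarith [ht k])

lemma pairing_vanish_of_not_interior (f : En n → EReal)
    (hint : interior (Tepi f) = ∅) :
    ∃ w : En n × ℝ, w ≠ 0 ∧ w.2 = 0 ∧ ∀ q ∈ Tepi f, ⟪q.1, w.1⟫_ℝ + q.2 * w.2 = 0 := by
  have hconv : Convex ℝ (Tepi f) := convex_tcai _ rfl _
  have h0 : (0 : En n × ℝ) ∈ Tepi f := zero_mem_tcai _ _
  have haff : ¬ affineSpan ℝ (Tepi f) = ⊤ := by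
    intro h
    have h2 := hconv.interior_nonempty_iff_affineSpan_eq_top.2 h
    rw [hint] at h2
    simpa using h2
  have hvs : ¬ vectorSpan ℝ (Tepi f) = ⊤ := fun h =>
    haff ((AffineSubspace.affineSpan_eq_top_iff_vectorSpan_eq_top_of_nonempty ℝ _ _ ⟨0, h0⟩).2 h)
  have hspan : ¬ Submodule.span ℝ (Tepi f) = ⊤ := by
    intro h
    apply hvs
    rw [eq_top_iff, ← h]
    apply Submodule.span_le.2
    intro v hv
    have := vsub_mem_vectorSpan ℝ hv h0
    simpa using this
  -- move to the L2 product space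
  set e : (En n × ℝ) ≃ₗ[ℝ] WithLp 2 (En n × ℝ) := (WithLp.linearEquiv 2 ℝ (En n × ℝ)).symm
    with he
  set V : Submodule ℝ (WithLp 2 (En n × ℝ)) := (Submodule.span ℝ (Tepi f)).map (e : En n × ℝ →ₗ[ℝ] WithLp 2 (En n × ℝ)) with hV
  have hVne : V ≠ ⊤ := by
    intro h
    apply hspan
    rw [← Submodule.comap_map_eq_of_injective e.injective (Submodule.span ℝ (Tepi f)), ← hV, h]
    exact Submodule.comap_top _
  have hVorth : Vᗮ ≠ ⊥ := by
    intro h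
    exact hVne (Submodule.orthogonal_eq_bot_iff.1 h)
  obtain ⟨w', hw'V, hw'0⟩ := Submodule.exists_mem_ne_zero_of_ne_bot hVorth
  have hw'pair : ∀ q ∈ Tepi f, ⟪q.1, (e.symm w').1⟫_ℝ + q.2 * (e.symm w').2 = 0 := by
    intro q hq
    have h1 : e q ∈ V := Submodule.mem_map_of_mem (Submodule.subset_span hq)
    have h2 : ⟪e q, w'⟫_ℝ = 0 := (Submodule.mem_orthogonal V w').1 hw'V (e q) h1
    rw [WithLp.prod_inner_apply] at h2
    have h3 : (e q).ofLp.1 = q.1 := rfl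
    have h4 : (e q).ofLp.2 = q.2 := rfl
    rw [h3, h4] at h2
    have h5 : (w'.ofLp.1 : En n) = (e.symm w').1 := rfl
    have h6 : (w'.ofLp.2 : ℝ) = (e.symm w').2 := rfl
    rw [h5, h6] at h2
    simpa [RCLike.inner_apply, mul_comm] using h2
  refine ⟨e.symm w', ?_, ?_, ?_⟩
  · intro h
    apply hw'0
    have : w' = e (e.symm w') := (e.apply_symm_apply w').symm
    rw [this, h, map_zero]
  · -- second coordinate vanishes, using (0,1) ∈ Tepi f
    have := hw'pair _ (up_mem_Tepi f)
    simpa using this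
  · exact hw'pair

lemma interior_Tepi_nonempty (f : En n → EReal)
    (hne : (subgradInfty f).Nonempty)
    (hline : ¬ ∃ ξ ∈ subgradInfty f, ∃ u : En n, u ≠ 0 ∧
      ∀ t : ℝ, ξ + t • u ∈ subgradInfty f) :
    (interior (Tepi f)).Nonempty := by
  by_contra hint
  rw [Set.not_nonempty_iff_eq_empty] at hint
  obtain ⟨w, hw0, hw2, hwpair⟩ := pairing_vanish_of_not_interior f hint
  obtain ⟨ξ₀, hξ₀⟩ := hne
  apply hline
  refine ⟨ξ₀, hξ₀, w.1, ?_, ?_⟩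
  · intro h
    apply hw0
    exact Prod.ext h hw2
  · intro t
    intro q hq
    have h1 : ⟪q.1, ξ₀⟫_ℝ + q.2 * (-1:ℝ) ≤ 0 := hξ₀ q hq
    have h2 : ⟪q.1, w.1⟫_ℝ + q.2 * w.2 = 0 := hwpair q hq
    rw [hw2, mul_zero, add_zero] at h2
    have h3 : ⟪q.1, ξ₀ + t • w.1⟫_ℝ = ⟪q.1, ξ₀⟫_ℝ + t * ⟪q.1, w.1⟫_ℝ := by
      rw [inner_add_right, real_inner_smul_right]
    show ⟪q.1, ξ₀ + t • w.1⟫_ℝ + q.2 * (-1:ℝ) ≤ 0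
    rw [h3, h2]
    linarith

end Main

end
set_option maxHeartbeats 1000000 in
/-- Corollary 4.3: if `∂f(∞)` is nonempty and contains no entire line, then the Clarke
subgradient multifunction is closed at infinity. -/
theorem stmt5 (n : ℕ) (f : En n → EReal) (hlsc : LowerSemicontinuous f)
    (hunb : ¬ IsBounded {x : En n | f x < ⊤})
    (hne : (subgradInfty f).Nonempty)
    (hline : ¬ ∃ ξ ∈ subgradInfty f, ∃ u : En n, u ≠ 0 ∧
      ∀ t : ℝ, ξ + t • u ∈ subgradInfty f)
    (x ξk : ℕ → En n) (ξ : En n)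
    (hx : Tendsto (fun k => ‖x k‖) atTop atTop)
    (hξk : ∀ k, ξk k ∈ clarkeSubgrad f (x k))
    (hξ : Tendsto ξk atTop (𝓝 ξ)) :
    ξ ∈ subgradInfty f := by
  have hSclosed : IsClosed (epig f) := isClosed_epig f hlsc
  have hξk' : ∀ k, ∃ y : ℝ, (y : EReal) = f (x k) ∧
      ∀ q ∈ clarkeTangentCone (epig f) (x k, y), ⟪q.1, ξk k⟫_ℝ + q.2 * (-1:ℝ) ≤ 0 := hξk
  choose y hy hineq using hξk'
  have hSne : (epig f).Nonempty := by
    refine ⟨(x 0, y 0), ?_⟩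
    simp only [epig, mem_setOf_eq]
    rw [← hy 0]
  -- interior points of the tangent cone at infinity satisfy the polar inequality with ξ
  have key : ∀ p ∈ interior (Tepi f), ⟪p.1, ξ⟫_ℝ + p.2 * (-1:ℝ) ≤ 0 := by
    intro p hp
    obtain ⟨R, hR⟩ := interior_to_clarke (epig f) hSclosed hSne p hp
    have hk0 : ∀ᶠ k in atTop, R + 1 ≤ ‖x k‖ := hx.eventually_ge_atTop (R+1)
    have hfin : ∀ᶠ k in atTop, ⟪p.1, ξk k⟫_ℝ + p.2 * (-1:ℝ) ≤ 0 := by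
      filter_upwards [hk0] with k hk
      apply hineq k p
      apply hR (x k, y k)
      · simp only [epig, mem_setOf_eq]
        rw [← hy k]
      · show R ≤ ‖x k‖
        linarith
    have hlim : Tendsto (fun k => ⟪p.1, ξk k⟫_ℝ + p.2 * (-1:ℝ)) atTop
        (𝓝 (⟪p.1, ξ⟫_ℝ + p.2 * (-1:ℝ))) :=
      ((tendsto_const_nhds (x := p.1)).inner hξ).add tendsto_const_nhds
    exact le_of_tendsto hlim hfin
  -- pass from interior points to all points of the cone
  obtain ⟨q₀, hq₀⟩ := interior_Tepi_nonempty f hne hline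
  have hconv : Convex ℝ (Tepi f) := convex_tcai _ rfl _
  intro q hq
  have hcomb : ∀ m : ℕ, ⟪((1/((m:ℝ)+1)) • q₀ + (1 - 1/((m:ℝ)+1)) • q).1, ξ⟫_ℝ
      + ((1/((m:ℝ)+1)) • q₀ + (1 - 1/((m:ℝ)+1)) • q).2 * (-1:ℝ) ≤ 0 := by
    intro m
    apply key
    apply hconv.combo_interior_self_mem_interior hq₀ hq
    · positivity
    · have h1 : 1/((m:ℝ)+1) ≤ 1 := by
        rw [div_le_one (by positivity)]
        linarith [Nat.cast_nonneg (α := ℝ) m]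
      linarith
    · ring
  have hcombo : Tendsto (fun m : ℕ => (1/((m:ℝ)+1)) • q₀ + (1 - 1/((m:ℝ)+1)) • q)
      atTop (𝓝 q) := by
    have h1 : Tendsto (fun m : ℕ => 1/((m:ℝ)+1)) atTop (𝓝 0) :=
      tendsto_one_div_add_atTop_nhds_zero_nat
    have h2 : Tendsto (fun m : ℕ => (1/((m:ℝ)+1)) • q₀) atTop (𝓝 ((0:ℝ) • q₀)) :=
      h1.smul_const q₀
    have h3 : Tendsto (fun m : ℕ => (1 - 1/((m:ℝ)+1)) • q) atTop (𝓝 ((1-(0:ℝ)) • q)) :=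
      ((tendsto_const_nhds.sub h1).smul_const q)
    have := h2.add h3
    simpa using this
  have hFcont : Continuous (fun z : En n × ℝ => ⟪z.1, ξ⟫_ℝ + z.2 * (-1:ℝ)) := by
    apply Continuous.add
    · exact (continuous_fst.inner continuous_const)
    · exact continuous_snd.mul continuous_const
  have hlim2 : Tendsto (fun m : ℕ => ⟪((1/((m:ℝ)+1)) • q₀ + (1 - 1/((m:ℝ)+1)) • q).1, ξ⟫_ℝ
      + ((1/((m:ℝ)+1)) • q₀ + (1 - 1/((m:ℝ)+1)) • q).2 * (-1:ℝ)) atTop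
      (𝓝 (⟪q.1, ξ⟫_ℝ + q.2 * (-1:ℝ))) := (hFcont.tendsto q).comp hcombo
  exact le_of_tendsto hlim2 (Eventually.of_forall hcomb)
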